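/- Let ε > 0, let E : ℝ × ℝ² → ℝ² be C¹ with ∂_{x₂}E₁(t,x) = ∂_{x₁}E₂(t,x) for all (t,x), and let f : ℝ × ℝ² × ℝ² → ℝ be C¹ such that there exists R > 0 with f(t,x,v) = 0 whenever |x| + |v| ≥ R. Assume that for all (t,x,v), ∂_t f(t,x,v) + (v/ε)·∇_x f(t,x,v) + (E(t,x)/ε + v^⊥/ε²)·∇_v f(t,x,v) = 0. Define f̄(t,x,v) = f(t, x − ε v^⊥, v) and ρ̄(t,x) = ∫_{ℝ²} f̄(t,x,v) dv. Then for all (t,x), ∂_t ρ̄(t,x) + div_x ( ∫_{ℝ²} (E(t, x − ε v^⊥))^⊥ f̄(t,x,v) dv ) = 0. -/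

import Mathlib

open MeasureTheory

noncomputable abbrev R2 : Type := EuclideanSpace ℝ (Fin 2)

/-- For `w = (w₁, w₂) ∈ ℝ²`, `perp w = (−w₂, w₁)`. -/
noncomputable def perp (w : R2) : R2 := !₂[-w 1, w 0]

/-!
Differentiate under the integral sign in `t` and in `x`. The integrand of the result is
`∂_t f̄ + div_x (E^⊥ f̄)`, and the Vlasov equation, transported by the change of variables
`x ↦ x - εv^⊥`, says that this equals `-div_v (f̄ (E/ε + v^⊥/ε²))`: the derivatives of `f` combine
into `∇f` applied to the Vlasov field, while the derivatives of `E` cancel because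
`tr (J ∘ DE) = tr (DE ∘ J)` for the rotation `J = perp`. A compactly supported divergence
integrates to zero.
-/

section ParametricIntegral

variable {V G : Type*} [NormedAddCommGroup V] [NormedSpace ℝ V] [NormedAddCommGroup G]
  [NormedSpace ℝ G]

lemma deriv_fst_eq_fderiv {F : ℝ → V → G} (hF : Differentiable ℝ (fun p : ℝ × V => F p.1 p.2))
    (s : ℝ) (v : V) :
    deriv (F · v) s = fderiv ℝ (fun p : ℝ × V => F p.1 p.2) (s, v) (1, 0) := by
  have h : HasDerivAt (F · v) (fderiv ℝ (fun p : ℝ × V => F p.1 p.2) (s, v) (1, 0)) s :=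
    (hF (s, v)).hasFDerivAt.comp_hasDerivAt (l := fun p : ℝ × V => F p.1 p.2) s
      ((hasDerivAt_id s).prodMk (hasDerivAt_const s v))
  exact h.deriv

variable [MeasurableSpace V] [BorelSpace V] {μ : Measure V} [IsFiniteMeasureOnCompacts μ]

lemma integrable_fderiv_apply {g : V → G} (hg : ContDiff ℝ 1 g) (hs : HasCompactSupport g)
    (u : V) : Integrable (fun v => fderiv ℝ g v u) μ :=
  ((hg.continuous_fderiv one_ne_zero).clm_apply continuous_const).integrable_of_hasCompactSupport
    (hs.fderiv_apply ℝ u)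

lemma integrable_deriv_and_hasDerivAt_integral [CompleteSpace G] {F : ℝ → V → G}
    (hF : ContDiff ℝ 1 (fun p : ℝ × V => F p.1 p.2)) {K : Set V} (hK : IsCompact K)
    (h0 : ∀ s, ∀ v ∉ K, F s v = 0) (s₀ : ℝ) :
    Integrable (fun v => deriv (F · v) s₀) μ ∧
      HasDerivAt (fun s => ∫ v, F s v ∂μ) (∫ v, deriv (F · v) s₀ ∂μ) s₀ := by
  have hFd : Differentiable ℝ (fun p : ℝ × V => F p.1 p.2) := hF.differentiable one_ne_zero
  have hderiv : Continuous (fun p : ℝ × V => deriv (F · p.2) p.1) := by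
    simp only [deriv_fst_eq_fderiv hFd]
    exact (hF.continuous_fderiv one_ne_zero).clm_apply continuous_const
  have hderiv0 : ∀ s, ∀ v ∉ K, deriv (F · v) s = 0 := fun s v hv => by
    simp [h0 _ v hv]
  have hint : ∀ s, Integrable (fun v => deriv (F · v) s) μ := fun s =>
    (hderiv.comp (Continuous.prodMk_right s)).integrable_of_hasCompactSupport
      (HasCompactSupport.intro hK (hderiv0 s))
  have hslice : ∀ s, Integrable (F s) μ := fun s =>
    (hF.continuous.comp (Continuous.prodMk_right s)).integrable_of_hasCompactSupport
      (HasCompactSupport.intro hK (h0 s))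
  obtain ⟨C, hC⟩ := ((isCompact_closedBall s₀ 1).prod hK).exists_bound_of_continuousOn
    hderiv.continuousOn
  have hbound : ∀ v, ∀ s ∈ Metric.ball s₀ 1, ‖deriv (F · v) s‖ ≤ K.indicator (fun _ => C) v := by
    intro v s hs
    by_cases hv : v ∈ K
    · simpa [hv] using hC (s, v) ⟨Metric.ball_subset_closedBall hs, hv⟩
    · simp [hv, hderiv0 s v]
  refine ⟨hint s₀, (hasDerivAt_integral_of_dominated_loc_of_deriv_le
    (Metric.ball_mem_nhds s₀ one_pos)
    (Filter.Eventually.of_forall fun s => (hslice s).aestronglyMeasurable) (hslice s₀)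
    (hint s₀).aestronglyMeasurable (Filter.Eventually.of_forall hbound)
    ((integrableOn_const hK.measure_lt_top.ne).integrable_indicator hK.measurableSet)
    (Filter.Eventually.of_forall fun v s _ => ?_)).2⟩
  exact (hFd.comp (differentiable_id.prodMk (differentiable_const v)) s).hasDerivAt

end ParametricIntegral

section Divergence

variable {V G : Type*} [NormedAddCommGroup V] [NormedSpace ℝ V] [FiniteDimensional ℝ V]
  [MeasurableSpace V] [BorelSpace V] {μ : Measure V} [μ.IsAddHaarMeasure]
  [NormedAddCommGroup G] [NormedSpace ℝ G]

lemma integral_fderiv_apply_eq_zero {g : V → G} (hg : ContDiff ℝ 1 g) (hs : HasCompactSupport g)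
    (u : V) : ∫ v, fderiv ℝ g v u ∂μ = 0 := by
  have h := integral_bilinear_hasLineDerivAt_right_eq_neg_left_of_integrable (μ := μ)
    (f := fun _ => (1 : ℝ)) (f' := fun _ => 0) (g' := fun v => fderiv ℝ g v u)
    (B := ContinuousLinearMap.lsmul ℝ ℝ) (by simp)
    (by simpa using integrable_fderiv_apply (μ := μ) hg hs u)
    (by simpa using hg.continuous.integrable_of_hasCompactSupport hs)
    (fun v _ => by simpa using (hasFDerivAt_const (1 : ℝ) v).hasLineDerivAt u)
    (fun v _ => (hg.differentiable one_ne_zero v).hasFDerivAt.hasLineDerivAt u)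
  simpa using h

lemma integral_sum_lineDeriv_eq_zero {ι : Type*} [Fintype ι] {g : ι → V → G}
    (hg : ∀ i, ContDiff ℝ 1 (g i)) (hs : ∀ i, HasCompactSupport (g i)) (u : ι → V) :
    ∫ v, ∑ i, lineDeriv ℝ (g i) v (u i) ∂μ = 0 := by
  simp_rw [fun i v => ((hg i).differentiable one_ne_zero v).lineDeriv_eq_fderiv (v := u i)]
  rw [integral_finsetSum _ fun i _ => integrable_fderiv_apply (hg i) (hs i) (u i)]
  exact Finset.sum_eq_zero fun i _ => integral_fderiv_apply_eq_zero (hg i) (hs i) (u i)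

end Divergence

noncomputable def perpL : R2 →L[ℝ] R2 :=
  LinearMap.toContinuousLinearMap
  { toFun := perp
    map_add' := fun a b => by ext j; fin_cases j <;> simp [perp]; ring
    map_smul' := fun c a => by ext j; fin_cases j <;> simp [perp] }

@[simp] lemma perpL_apply (w : R2) : perpL w = perp w := rfl

@[simp] lemma perp_apply_zero (w : R2) : perp w 0 = -w 1 := rfl

@[simp] lemma perp_apply_one (w : R2) : perp w 1 = w 0 := rfl

@[fun_prop] lemma ContDiff.perp_apply {X : Type*} [NormedAddCommGroup X] [NormedSpace ℝ X]
    {n : WithTop ℕ∞} {g : X → R2} (hg : ContDiff ℝ n g) (i : Fin 2) :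
    ContDiff ℝ n (fun w => perp (g w) i) :=
  ((EuclideanSpace.proj i).comp perpL).contDiff.comp hg

lemma perp_single_zero : perp (EuclideanSpace.single 0 1) = EuclideanSpace.single 1 1 := by
  ext j; fin_cases j <;> simp [perp]

lemma perp_single_one : perp (EuclideanSpace.single 1 1) = -EuclideanSpace.single 0 1 := by
  ext j; fin_cases j <;> simp [perp]

/-- `tr (J ∘ A) = tr (A ∘ J)` in coordinates, for the rotation `J = perp`. -/
lemma sum_perp_apply_single (A : R2 →L[ℝ] R2) :
    ∑ i, perp (A (EuclideanSpace.single i 1)) i = ∑ i, A (perp (EuclideanSpace.single i 1)) i := by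
  simp [Fin.sum_univ_two, perp_single_zero, perp_single_one]
  ring

/-- The velocity flux `f̄ (E/ε + w^⊥/ε²)` of the gyro-density `f̄ (t, x, w) = f (t, x - εw^⊥, w)`,
with `E` evaluated at `(t, x - εw^⊥)`. -/
noncomputable def gyroVelocityFlux (ε : ℝ) (E : ℝ × R2 → R2) (f : ℝ × R2 × R2 → ℝ) (t : ℝ)
    (x w : R2) : R2 :=
  f (t, x - ε • perp w, w) • (ε⁻¹ • E (t, x - ε • perp w) + (ε ^ 2)⁻¹ • perp w)

section Gyro

variable {ε : ℝ} {E : ℝ × R2 → R2} {f : ℝ × R2 × R2 → ℝ}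

lemma hasDerivAt_perp_mul_along_x (hE : Differentiable ℝ E) (hf : Differentiable ℝ f) (t : ℝ)
    (x v u : R2) (i : Fin 2) :
    HasDerivAt (fun s : ℝ => perp (E (t, (x + s • u) - ε • perp v)) i
        * f (t, (x + s • u) - ε • perp v, v))
      (perp (fderiv ℝ (fun y => E (t, y)) (x - ε • perp v) u) i * f (t, x - ε • perp v, v)
        + perp (E (t, x - ε • perp v)) i * fderiv ℝ f (t, x - ε • perp v, v) (0, u, 0)) 0 := by
  have hy : HasDerivAt (fun s : ℝ => (x + s • u) - ε • perp v) u 0 := by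
    simpa using (((hasDerivAt_id (0 : ℝ)).smul_const u).const_add x).sub_const (ε • perp v)
  have hEy : HasDerivAt (fun s : ℝ => E (t, (x + s • u) - ε • perp v))
      (fderiv ℝ (fun y => E (t, y)) (x - ε • perp v) u) 0 :=
    (hE.comp (differentiable_const t |>.prodMk differentiable_id) _).hasFDerivAt
      |>.comp_hasDerivAt_of_eq 0 hy (by simp)
  have hfy : HasDerivAt (fun s : ℝ => f (t, (x + s • u) - ε • perp v, v))
      (fderiv ℝ f (t, x - ε • perp v, v) (0, u, 0)) 0 :=
    (hf _).hasFDerivAt.comp_hasDerivAt_of_eq 0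
      ((hasDerivAt_const 0 t).prodMk (hy.prodMk (hasDerivAt_const 0 v))) (by simp)
  have hpE := ((EuclideanSpace.proj i).comp perpL).hasFDerivAt.comp_hasDerivAt 0 hEy
  exact (hpE.mul hfy).congr_deriv (by simp)

lemma hasDerivAt_gyroVelocityFlux_along_v (hE : Differentiable ℝ E) (hf : Differentiable ℝ f)
    (t : ℝ) (x v u : R2) :
    HasDerivAt (fun s : ℝ => gyroVelocityFlux ε E f t x (v + s • u))
      (f (t, x - ε • perp v, v) • (ε⁻¹ • fderiv ℝ (fun y => E (t, y)) (x - ε • perp v)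
          (-(ε • perp u)) + (ε ^ 2)⁻¹ • perp u)
        + fderiv ℝ f (t, x - ε • perp v, v) (0, -(ε • perp u), u)
          • (ε⁻¹ • E (t, x - ε • perp v) + (ε ^ 2)⁻¹ • perp v)) 0 := by
  have hw : HasDerivAt (fun s : ℝ => v + s • u) u 0 := by
    simpa using ((hasDerivAt_id (0 : ℝ)).smul_const u).const_add v
  have hpw : HasDerivAt (fun s : ℝ => perp (v + s • u)) (perp u) 0 :=
    perpL.hasFDerivAt.comp_hasDerivAt 0 hw
  have hy : HasDerivAt (fun s : ℝ => x - ε • perp (v + s • u)) (-(ε • perp u)) 0 :=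
    (hpw.const_smul ε).const_sub x
  have hEy : HasDerivAt (fun s : ℝ => E (t, x - ε • perp (v + s • u)))
      (fderiv ℝ (fun y => E (t, y)) (x - ε • perp v) (-(ε • perp u))) 0 :=
    (hE.comp (differentiable_const t |>.prodMk differentiable_id) _).hasFDerivAt
      |>.comp_hasDerivAt_of_eq 0 hy (by simp)
  have hfy : HasDerivAt (fun s : ℝ => f (t, x - ε • perp (v + s • u), v + s • u))
      (fderiv ℝ f (t, x - ε • perp v, v) (0, -(ε • perp u), u)) 0 :=
    (hf _).hasFDerivAt.comp_hasDerivAt_of_eq 0 ((hasDerivAt_const 0 t).prodMk (hy.prodMk hw))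
      (by simp)
  exact (hfy.smul ((hEy.const_smul ε⁻¹).add (hpw.const_smul (ε ^ 2)⁻¹))).congr_deriv (by simp)

/-- The Vlasov field `(1, v/ε, b/ε + v^⊥/ε²)` in terms of the phase-space directions
`(0, e_i, 0)` and `(0, -ε e_i^⊥, e_i)` of `∂_{x_i}` and `∂_{v_i}` in gyro-coordinates. -/
lemma vlasovField_eq_sum (hε : ε ≠ 0) (b v : R2) :
    ((1 : ℝ), ε⁻¹ • v, ε⁻¹ • b + (ε ^ 2)⁻¹ • perp v)
      = ((1 : ℝ), (0 : R2 × R2))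
        + ∑ i, perp b i • ((0 : ℝ), EuclideanSpace.single i 1, (0 : R2))
        + ∑ i, (ε⁻¹ • b + (ε ^ 2)⁻¹ • perp v) i
          • ((0 : ℝ), -(ε • perp (EuclideanSpace.single i 1)), EuclideanSpace.single i 1) := by
  refine Prod.ext (by simp) (Prod.ext ?_ ?_) <;> ext j <;> fin_cases j <;>
    simp [Fin.sum_univ_two, perp_single_zero, perp_single_one] <;> field_simp <;> ring

lemma gyro_local_conservation (hε : ε ≠ 0) (hE : Differentiable ℝ E) (hf : Differentiable ℝ f)
    (hPDE : ∀ t x v, fderiv ℝ f (t, x, v)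
      (1, ε⁻¹ • v, ε⁻¹ • E (t, x) + (ε ^ 2)⁻¹ • perp v) = 0)
    (t : ℝ) (x v : R2) :
    deriv (fun s => f (s, x - ε • perp v, v)) t
      + ∑ i : Fin 2, deriv (fun s : ℝ =>
          perp (E (t, (x + s • EuclideanSpace.single i 1) - ε • perp v)) i
            * f (t, (x + s • EuclideanSpace.single i 1) - ε • perp v, v)) 0
      = -∑ i : Fin 2, lineDeriv ℝ (fun w => gyroVelocityFlux ε E f t x w i) v
          (EuclideanSpace.single i 1) := by
  have ht : HasDerivAt (fun s => f (s, x - ε • perp v, v))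
      (fderiv ℝ f (t, x - ε • perp v, v) (1, 0)) t := (hf _).hasFDerivAt.comp_hasDerivAt t
    ((hasDerivAt_id t).prodMk (hasDerivAt_const t (x - ε • perp v, v)))
  have hx := fun i : Fin 2 =>
    hasDerivAt_perp_mul_along_x (ε := ε) hE hf t x v (EuclideanSpace.single i 1) i
  have hv := fun i : Fin 2 => HasLineDerivAt.lineDeriv
    (f := fun w => gyroVelocityFlux ε E f t x w i) (x := v) (v := EuclideanSpace.single i 1)
    ((EuclideanSpace.proj (𝕜 := ℝ) i).hasFDerivAt.comp_hasDerivAt 0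
      (hasDerivAt_gyroVelocityFlux_along_v (ε := ε) hE hf t x v (EuclideanSpace.single i 1)))
  rw [ht.deriv, Finset.sum_congr rfl fun i _ => (hx i).deriv, Finset.sum_congr rfl fun i _ => hv i]
  have hVlasov := hPDE t (x - ε • perp v) v
  rw [vlasovField_eq_sum hε] at hVlasov
  have htrace := sum_perp_apply_single (fderiv ℝ (fun y => E (t, y)) (x - ε • perp v))
  simp only [map_add, map_sum, map_smul, smul_eq_mul] at hVlasov
  norm_num [Fin.sum_univ_two, smul_smul, inv_mul_cancel₀ hε, perp_single_zero, perp_single_one]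
    at hVlasov htrace ⊢
  linear_combination hVlasov + f (t, x - ε • perp v, v) * htrace

end Gyro

theorem gyro_continuity_equation_general (ε : ℝ) (hε : 0 < ε)
    (E : ℝ × R2 → R2) (hE : ContDiff ℝ 1 E)
    (f : ℝ × R2 × R2 → ℝ) (hf : ContDiff ℝ 1 f)
    (R : ℝ)
    (hsupp : ∀ t x v, R ≤ ‖x‖ + ‖v‖ → f (t, x, v) = 0)
    (hPDE : ∀ t x v, fderiv ℝ f (t, x, v)
      (1, ε⁻¹ • v, ε⁻¹ • E (t, x) + (ε ^ 2)⁻¹ • perp v) = 0) :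
    ∀ t x,
      deriv (fun s => ∫ v, f (s, x - ε • perp v, v)) t
        + (∑ i : Fin 2, deriv (fun s : ℝ =>
            ∫ v, perp (E (t, (x + s • EuclideanSpace.single i 1) - ε • perp v)) i
              * f (t, (x + s • EuclideanSpace.single i 1) - ε • perp v, v)) 0) = 0 := by
  intro t x
  have hK : IsCompact (Metric.closedBall (0 : R2) R) := isCompact_closedBall 0 R
  have hvanish : ∀ s y v, v ∉ Metric.closedBall (0 : R2) R → f (s, y, v) = 0 := fun s y v hv =>
    hsupp s y v <| (not_le.1 (by simpa using hv)).le.trans (le_add_of_nonneg_left (norm_nonneg y))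
  obtain ⟨hρ_int, hρ⟩ := integrable_deriv_and_hasDerivAt_integral (μ := volume)
    (F := fun s v => f (s, x - ε • perp v, v)) (by fun_prop) hK
    (fun s v hv => hvanish _ _ v hv) t
  have hJ := fun i : Fin 2 => integrable_deriv_and_hasDerivAt_integral (μ := volume)
    (F := fun s v => perp (E (t, (x + s • EuclideanSpace.single i 1) - ε • perp v)) i
      * f (t, (x + s • EuclideanSpace.single i 1) - ε • perp v, v)) (by fun_prop) hK
    (fun s v hv => by simp [hvanish _ _ v hv]) 0
  rw [hρ.deriv, Finset.sum_congr rfl fun i _ => (hJ i).2.deriv,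
    ← integral_finsetSum _ fun i _ => (hJ i).1,
    ← integral_add hρ_int (integrable_finsetSum _ fun i _ => (hJ i).1)]
  simp_rw [gyro_local_conservation hε.ne' (hE.differentiable one_ne_zero)
    (hf.differentiable one_ne_zero) hPDE t x]
  rw [integral_neg, integral_sum_lineDeriv_eq_zero (fun i => by unfold gyroVelocityFlux; fun_prop)
    (fun i => HasCompactSupport.intro hK fun w hw => by simp [gyroVelocityFlux, hvanish _ _ w hw]),
    neg_zero]

/-- If `f` is a `C¹`, compactly supported (in `(x,v)`) solution of the Vlasov equation
`∂_t f + (v/ε)·∇_x f + (E(t,x)/ε + v^⊥/ε²)·∇_v f = 0` with `E` a `C¹` curl-free field,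
then the gyro-macroscopic density `ρ̄(t,x) = ∫ f(t, x − εv^⊥, v) dv` satisfies the
continuity equation `∂_t ρ̄ + div_x ∫ (E(t, x − εv^⊥))^⊥ f̄ dv = 0`. -/
theorem gyro_continuity_equation (ε : ℝ) (hε : 0 < ε)
    (E : ℝ × R2 → R2) (hE : ContDiff ℝ 1 E)
    (hcurl : ∀ t x, fderiv ℝ (fun y => E (t, y)) x (EuclideanSpace.single 1 1) 0
      = fderiv ℝ (fun y => E (t, y)) x (EuclideanSpace.single 0 1) 1)
    (f : ℝ × R2 × R2 → ℝ) (hf : ContDiff ℝ 1 f)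
    (R : ℝ) (hR : 0 < R)
    (hsupp : ∀ t x v, R ≤ ‖x‖ + ‖v‖ → f (t, x, v) = 0)
    (hPDE : ∀ t x v, fderiv ℝ f (t, x, v)
      (1, ε⁻¹ • v, ε⁻¹ • E (t, x) + (ε ^ 2)⁻¹ • perp v) = 0) :
    ∀ t x,
      deriv (fun s => ∫ v, f (s, x - ε • perp v, v)) t
        + (∑ i : Fin 2, deriv (fun s : ℝ =>
            ∫ v, perp (E (t, (x + s • EuclideanSpace.single i 1) - ε • perp v)) i
              * f (t, (x + s • EuclideanSpace.single i 1) - ε • perp v, v)) 0) = 0 :=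
  gyro_continuity_equation_general ε hε E hE f hf R hsupp hPDE
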